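/- arXiv:1911.10191 — 2 statements merged into one kernel-verified Lean document; each statement's English description precedes it below -/
import Mathlib

section
/- For x ∈ (0,1), ∫₀ˣ u dH̃(u) = x·H̃(x) + 2·G(x/2), where H̃(s) = −(Φ⁻¹(s/2))² and G(x) = x − Φ⁻¹(x)·φ(Φ⁻¹(x)). -/
open Real MeasureTheory Filter Set
open Topology

noncomputable def stdPdf (v : ℝ) : ℝ := (Real.sqrt (2 * Real.pi))⁻¹ * Real.exp (-(v ^ 2) / 2)
noncomputable def stdCdf (v : ℝ) : ℝ := ∫ t in Set.Iic v, stdPdf t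
noncomputable def stdQuantile : ℝ → ℝ := Function.invFun stdCdf

lemma stdPdf_pos (v : ℝ) : 0 < stdPdf v := by
  apply mul_pos (inv_pos.2 (Real.sqrt_pos.2 (by positivity))) (Real.exp_pos _)

lemma stdPdf_fun_eq : stdPdf = fun v => (Real.sqrt (2 * Real.pi))⁻¹ * Real.exp (-(1/2) * v ^ 2) := by
  funext v; rw [stdPdf]; ring_nf

lemma continuous_stdPdf : Continuous stdPdf := by
  unfold stdPdf; fun_prop

lemma integrable_stdPdf : Integrable stdPdf := by
  rw [stdPdf_fun_eq]
  exact (integrable_exp_neg_mul_sq (by norm_num : (0:ℝ) < 1/2)).const_mul _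

lemma integrable_mul_stdPdf : Integrable (fun t => t * stdPdf t) := by
  simp only [stdPdf_fun_eq]
  have := (integrable_mul_exp_neg_mul_sq (by norm_num : (0:ℝ) < 1/2)).const_mul
    ((Real.sqrt (2 * Real.pi))⁻¹)
  exact this.congr (Filter.Eventually.of_forall fun t => by ring)

lemma hasDerivAt_stdPdf (v : ℝ) : HasDerivAt stdPdf (-v * stdPdf v) v := by
  have h : HasDerivAt (fun v : ℝ => -(v ^ 2) / 2) (-v) v := by
    have := ((hasDerivAt_pow 2 v).neg).div_const 2
    refine this.congr_deriv ?_
    push_cast; ring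
  have h2 := (h.exp).const_mul ((Real.sqrt (2 * Real.pi))⁻¹)
  have h3 : HasDerivAt stdPdf ((Real.sqrt (2 * Real.pi))⁻¹ * (Real.exp (-(v^2)/2) * (-v))) v := h2
  convert h3 using 1
  rw [stdPdf]; ring

lemma integral_stdPdf : ∫ v, stdPdf v = 1 := by
  rw [stdPdf_fun_eq, MeasureTheory.integral_const_mul, integral_gaussian,
    show Real.pi / (1/2) = 2 * Real.pi by ring,
    inv_mul_cancel₀ (by positivity)]

lemma stdPdf_neg (v : ℝ) : stdPdf (-v) = stdPdf v := by rw [stdPdf, stdPdf, neg_sq]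

lemma stdCdf_sub (a b : ℝ) : stdCdf b - stdCdf a = ∫ t in a..b, stdPdf t := by
  rw [stdCdf, stdCdf,
    intervalIntegral.integral_Iic_sub_Iic integrable_stdPdf.integrableOn integrable_stdPdf.integrableOn]

lemma hasDerivAt_stdCdf (v : ℝ) : HasDerivAt stdCdf (stdPdf v) v := by
  have h : HasDerivAt (fun u => stdCdf 0 + ∫ t in (0:ℝ)..u, stdPdf t) (stdPdf v) v := by
    refine HasDerivAt.const_add _ ?_
    exact intervalIntegral.integral_hasDerivAt_right
      (integrable_stdPdf.intervalIntegrable)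
      (continuous_stdPdf.aestronglyMeasurable.stronglyMeasurableAtFilter)
      continuous_stdPdf.continuousAt
  refine h.congr_of_eventuallyEq (Filter.Eventually.of_forall fun u => ?_)
  have := stdCdf_sub 0 u
  simp only []
  linarith

lemma stdCdf_strictMono : StrictMono stdCdf := by
  intro a b hab
  have h : 0 < stdCdf b - stdCdf a := by
    rw [stdCdf_sub a b]
    exact intervalIntegral.intervalIntegral_pos_of_pos
      (integrable_stdPdf.intervalIntegrable) (fun x => stdPdf_pos x) hab
  linarith

lemma stdCdf_nonneg (v : ℝ) : 0 ≤ stdCdf v :=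
  MeasureTheory.setIntegral_nonneg measurableSet_Iic fun x _ => (stdPdf_pos x).le

lemma stdCdf_neg_eq (v : ℝ) : stdCdf (-v) = 1 - stdCdf v := by
  have h1 : stdCdf v + ∫ t in Ioi v, stdPdf t = 1 := by
    rw [stdCdf, intervalIntegral.integral_Iic_add_Ioi integrable_stdPdf.integrableOn
      integrable_stdPdf.integrableOn, integral_stdPdf]
  have h2 : stdCdf (-v) = ∫ t in Ioi v, stdPdf t := by
    rw [stdCdf, ← integral_comp_neg_Ioi]
    simp only [stdPdf_neg]
  linarith

lemma integral_Iic_neg_mul_stdPdf (v : ℝ) : ∫ t in Iic v, -t * stdPdf t = stdPdf v := by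
  have htend : Tendsto stdPdf atBot (𝓝 0) := by
    have hsq : Tendsto (fun v : ℝ => v ^ 2) atBot atTop := by
      have := (tendsto_pow_atTop (α := ℝ) (n := 2) two_ne_zero).comp tendsto_abs_atBot_atTop
      exact this.congr fun x => sq_abs x
    have h1 : Tendsto (fun v : ℝ => -(v ^ 2) / 2) atBot atBot :=
      (tendsto_neg_atTop_atBot.comp hsq).atBot_div_const (by norm_num)
    have h2 : Tendsto (fun x : ℝ => (Real.sqrt (2*Real.pi))⁻¹ * Real.exp (-(x^2)/2)) atBot
        (𝓝 ((Real.sqrt (2*Real.pi))⁻¹ * 0)) := (Real.tendsto_exp_atBot.comp h1).const_mul _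
    rw [mul_zero] at h2
    exact h2
  have := MeasureTheory.integral_Iic_of_hasDerivAt_of_tendsto'
    (f := stdPdf) (f' := fun t => -t * stdPdf t) (a := v) (m := 0)
    (fun x _ => hasDerivAt_stdPdf x) (integrable_mul_stdPdf.neg.congr
      (Filter.Eventually.of_forall fun t => by simp [neg_mul])).integrableOn htend
  simpa using this

lemma mills (v : ℝ) (hv : v < 0) : stdCdf v ≤ stdPdf v / (-v) := by
  have key : stdCdf v ≤ ∫ t in Iic v, (-t * stdPdf t) / (-v) := by
    rw [stdCdf]
    refine MeasureTheory.setIntegral_mono_on integrable_stdPdf.integrableOn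
      ?_ measurableSet_Iic (fun t ht => ?_)
    · exact ((integrable_mul_stdPdf.neg.congr
        (Filter.Eventually.of_forall fun t => by simp [neg_mul])).div_const _).integrableOn
    · have ht' : t ≤ v := ht
      rw [le_div_iff₀ (by linarith : (0:ℝ) < -v)]
      nlinarith [stdPdf_pos t]
  rw [MeasureTheory.integral_div, integral_Iic_neg_mul_stdPdf] at key
  exact key

lemma tendsto_stdPdf_atBot : Tendsto stdPdf atBot (𝓝 0) := by
  have hsq : Tendsto (fun v : ℝ => v ^ 2) atBot atTop := by
    have := (tendsto_pow_atTop (α := ℝ) (n := 2) two_ne_zero).comp tendsto_abs_atBot_atTop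
    exact this.congr fun x => sq_abs x
  have h1 : Tendsto (fun v : ℝ => -(v ^ 2) / 2) atBot atBot :=
    (tendsto_neg_atTop_atBot.comp hsq).atBot_div_const (by norm_num)
  have h2 : Tendsto (fun x : ℝ => (Real.sqrt (2*Real.pi))⁻¹ * Real.exp (-(x^2)/2)) atBot
      (𝓝 ((Real.sqrt (2*Real.pi))⁻¹ * 0)) := (Real.tendsto_exp_atBot.comp h1).const_mul _
  rw [mul_zero] at h2
  exact h2

lemma tendsto_stdCdf_atBot : Tendsto stdCdf atBot (𝓝 0) := by
  have h1 : ∀ᶠ v in atBot, stdCdf v ≤ stdPdf v := by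
    filter_upwards [eventually_le_atBot (-1 : ℝ)] with v hv
    calc stdCdf v ≤ stdPdf v / -v := mills v (by linarith)
    _ ≤ stdPdf v := by
      rw [div_le_iff₀ (by linarith)]
      nlinarith [stdPdf_pos v]
  exact tendsto_of_tendsto_of_tendsto_of_le_of_le' tendsto_const_nhds tendsto_stdPdf_atBot
    (Filter.Eventually.of_forall stdCdf_nonneg) h1

lemma tendsto_stdCdf_atTop : Tendsto stdCdf atTop (𝓝 1) := by
  have h : Tendsto (fun v : ℝ => 1 - stdCdf (-v)) atTop (𝓝 (1 - 0)) :=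
    tendsto_const_nhds.sub (tendsto_stdCdf_atBot.comp tendsto_neg_atTop_atBot)
  rw [sub_zero] at h
  exact h.congr fun v => by rw [stdCdf_neg_eq]; ring

lemma stdCdf_pos (v : ℝ) : 0 < stdCdf v :=
  lt_of_le_of_lt (stdCdf_nonneg (v - 1)) (stdCdf_strictMono (by linarith))

lemma stdCdf_lt_one (v : ℝ) : stdCdf v < 1 := by
  have h := stdCdf_pos (-v)
  rw [stdCdf_neg_eq] at h
  linarith

lemma continuous_stdCdf : Continuous stdCdf :=
  continuous_iff_continuousAt.2 fun v => (hasDerivAt_stdCdf v).continuousAt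

lemma exists_stdCdf_eq {y : ℝ} (hy : y ∈ Ioo (0:ℝ) 1) : ∃ v, stdCdf v = y := by
  obtain ⟨a, ha⟩ := (tendsto_stdCdf_atBot.eventually_lt_const hy.1).exists
  obtain ⟨b, hb⟩ := (tendsto_stdCdf_atTop.eventually_const_lt hy.2).exists
  have hab : a ≤ b := (stdCdf_strictMono.lt_iff_lt.1 (ha.trans hb)).le
  obtain ⟨v, _, hv⟩ := intermediate_value_Icc hab continuous_stdCdf.continuousOn ⟨ha.le, hb.le⟩
  exact ⟨v, hv⟩

lemma stdCdf_stdQuantile {y : ℝ} (hy : y ∈ Ioo (0:ℝ) 1) : stdCdf (stdQuantile y) = y :=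
  Function.invFun_eq (exists_stdCdf_eq hy)

lemma stdQuantile_stdCdf (v : ℝ) : stdQuantile (stdCdf v) = v :=
  Function.leftInverse_invFun stdCdf_strictMono.injective v

lemma stdQuantile_strictMonoOn : StrictMonoOn stdQuantile (Ioo (0:ℝ) 1) := by
  intro y1 h1 y2 h2 h12
  have e1 := stdCdf_stdQuantile h1
  have e2 := stdCdf_stdQuantile h2
  exact stdCdf_strictMono.lt_iff_lt.1 (by rw [e1, e2]; exact h12)

lemma image_stdQuantile : stdQuantile '' (Ioo (0:ℝ) 1) = univ := by
  apply eq_univ_of_forall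
  intro v
  exact ⟨stdCdf v, ⟨stdCdf_pos v, stdCdf_lt_one v⟩, stdQuantile_stdCdf v⟩

lemma continuousAt_stdQuantile {y : ℝ} (hy : y ∈ Ioo (0:ℝ) 1) : ContinuousAt stdQuantile y := by
  refine stdQuantile_strictMonoOn.continuousAt_of_image_mem_nhds
    (isOpen_Ioo.mem_nhds hy) ?_
  rw [image_stdQuantile]
  exact univ_mem

lemma hasDerivAt_stdQuantile {y : ℝ} (hy : y ∈ Ioo (0:ℝ) 1) :
    HasDerivAt stdQuantile (stdPdf (stdQuantile y))⁻¹ y := by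
  refine HasDerivAt.of_local_left_inverse (continuousAt_stdQuantile hy)
    (hasDerivAt_stdCdf (stdQuantile y)) (stdPdf_pos _).ne' ?_
  filter_upwards [isOpen_Ioo.mem_nhds hy] with z hz
  exact stdCdf_stdQuantile hz

lemma tendsto_stdQuantile_atBot : Tendsto stdQuantile (𝓝[>] (0:ℝ)) atBot := by
  rw [tendsto_atBot]
  intro b
  filter_upwards [Ioo_mem_nhdsGT_of_mem (left_mem_Ico.2 (stdCdf_pos b))] with y hy
  have hy1 : y ∈ Ioo (0:ℝ) 1 := ⟨hy.1, hy.2.trans (stdCdf_lt_one b)⟩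
  have : stdCdf (stdQuantile y) < stdCdf b := by rw [stdCdf_stdQuantile hy1]; exact hy.2
  exact (stdCdf_strictMono.lt_iff_lt.1 this).le

noncomputable def Htilde (s : ℝ) : ℝ := -(stdQuantile (s / 2)) ^ 2
noncomputable def Gfun (x : ℝ) : ℝ := x - stdQuantile x * stdPdf (stdQuantile x)

noncomputable def gAux (u : ℝ) : ℝ := u * (-stdQuantile (u / 2) / stdPdf (stdQuantile (u / 2)))

lemma hasDerivAt_Htilde {u : ℝ} (hu : u ∈ Ioo (0:ℝ) 1) :
    HasDerivAt Htilde (-stdQuantile (u/2) / stdPdf (stdQuantile (u/2))) u := by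
  have hu2 : u/2 ∈ Ioo (0:ℝ) 1 := ⟨by linarith [hu.1], by linarith [hu.2]⟩
  have hq : HasDerivAt (fun s : ℝ => stdQuantile (s/2))
      ((stdPdf (stdQuantile (u/2)))⁻¹ * (1/2)) u :=
    (hasDerivAt_stdQuantile hu2).comp u ((hasDerivAt_id u).div_const 2)
  have h := (hq.pow 2).neg
  have h2 : HasDerivAt Htilde
      (-(2 * stdQuantile (u/2) ^ (2-1) * ((stdPdf (stdQuantile (u/2)))⁻¹ * (1/2)))) u := h
  convert h2 using 1
  have hφ := stdPdf_pos (stdQuantile (u/2))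
  field_simp
  ring

lemma hasDerivAt_Gfun {y : ℝ} (hy : y ∈ Ioo (0:ℝ) 1) :
    HasDerivAt Gfun ((stdQuantile y)^2) y := by
  have hq := hasDerivAt_stdQuantile hy
  have hφq : HasDerivAt (fun z => stdPdf (stdQuantile z))
      (-stdQuantile y * stdPdf (stdQuantile y) * (stdPdf (stdQuantile y))⁻¹) y :=
    (hasDerivAt_stdPdf (stdQuantile y)).comp y hq
  have h := (hasDerivAt_id y).sub (hq.mul hφq)
  have h2 : HasDerivAt Gfun
      (1 - ((stdPdf (stdQuantile y))⁻¹ * stdPdf (stdQuantile y) +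
        stdQuantile y * (-stdQuantile y * stdPdf (stdQuantile y) * (stdPdf (stdQuantile y))⁻¹))) y := h
  convert h2 using 1
  have hφ := stdPdf_pos (stdQuantile y)
  field_simp
  ring

lemma hasDerivAt_F {x : ℝ} (hx : x ∈ Ioo (0:ℝ) 1) :
    HasDerivAt (fun a => a * Htilde a + 2 * Gfun (a/2)) (gAux x) x := by
  have hx2 : x/2 ∈ Ioo (0:ℝ) 1 := ⟨by linarith [hx.1], by linarith [hx.2]⟩
  have h1 := (hasDerivAt_id x).mul (hasDerivAt_Htilde hx)
  have h2 := ((hasDerivAt_Gfun hx2).comp x ((hasDerivAt_id x).div_const 2)).const_mul 2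
  have h := h1.add h2
  refine h.congr_deriv ?_
  simp only [Htilde, gAux, id_eq]
  ring

lemma continuousAt_gAux {u : ℝ} (hu : u ∈ Ioo (0:ℝ) 1) : ContinuousAt gAux u := by
  have hu2 : u/2 ∈ Ioo (0:ℝ) 1 := ⟨by linarith [hu.1], by linarith [hu.2]⟩
  have hdiv : ContinuousAt (fun s : ℝ => s/2) u := continuousAt_id.div_const 2
  have hq : ContinuousAt (fun s : ℝ => stdQuantile (s/2)) u :=
    ContinuousAt.comp (f := fun s : ℝ => s/2) (continuousAt_stdQuantile hu2) hdiv
  exact continuousAt_id.mul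
    ((hq.neg).div (continuous_stdPdf.continuousAt.comp hq) (stdPdf_pos _).ne')

lemma gAux_bound {u : ℝ} (hu : 0 < u) (hu2 : u ≤ 2 * stdCdf (-1)) :
    gAux u ∈ Icc (0:ℝ) 2 := by
  have h1 : u/2 ∈ Ioo (0:ℝ) 1 :=
    ⟨by linarith, lt_of_le_of_lt (by linarith) (stdCdf_lt_one (-1))⟩
  set v := stdQuantile (u/2) with hv
  have hΦv : stdCdf v = u/2 := stdCdf_stdQuantile h1
  have hvle : v ≤ -1 := by
    by_contra h
    push_neg at h
    have := stdCdf_strictMono h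
    rw [hΦv] at this
    linarith
  have hm := mills v (by linarith)
  rw [hΦv] at hm
  have hφ := stdPdf_pos v
  rw [div_le_div_iff₀ (by norm_num : (0:ℝ) < 2) (by linarith : (0:ℝ) < -v)] at hm
  constructor
  · exact mul_nonneg hu.le (div_nonneg (by linarith) hφ.le)
  · rw [gAux, ← hv, mul_div_assoc']
    rw [div_le_iff₀ hφ]
    nlinarith

lemma intervalIntegrable_gAux_right {a x : ℝ} (ha : 0 < a) (hax : a ≤ x) (hx : x < 1) :
    IntervalIntegrable gAux volume a x := by
  apply ContinuousOn.intervalIntegrable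
  intro u hu
  rw [uIcc_of_le hax] at hu
  exact (continuousAt_gAux ⟨lt_of_lt_of_le ha hu.1, lt_of_le_of_lt hu.2 hx⟩).continuousWithinAt

lemma intervalIntegrable_gAux_zero {b : ℝ} (hb : 0 < b) (hb1 : b < 1) :
    IntervalIntegrable gAux volume 0 b := by
  set m := min b (2 * stdCdf (-1)) with hm
  have hm0 : 0 < m := lt_min hb (by linarith [stdCdf_pos (-1)])
  have hmb : m ≤ b := min_le_left _ _
  have h1 : IntervalIntegrable gAux volume 0 m := by
    rw [intervalIntegrable_iff_integrableOn_Ioc_of_le hm0.le]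
    refine ⟨ContinuousOn.aestronglyMeasurable (fun u hu =>
      (continuousAt_gAux ⟨hu.1, lt_of_le_of_lt (hu.2.trans hmb) hb1⟩).continuousWithinAt)
      measurableSet_Ioc, ?_⟩
    apply MeasureTheory.HasFiniteIntegral.restrict_of_bounded (C := 2) measure_Ioc_lt_top
    rw [ae_restrict_iff' measurableSet_Ioc]
    refine Filter.Eventually.of_forall fun u hu => ?_
    have hbd := gAux_bound hu.1 (hu.2.trans (min_le_right _ _))
    rw [Real.norm_eq_abs, abs_le]
    exact ⟨by linarith [hbd.1], hbd.2⟩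
  exact h1.trans (intervalIntegrable_gAux_right hm0 hmb hb1)

lemma tendsto_mul_stdPdf_atTop : Tendsto (fun t : ℝ => t * stdPdf t) atTop (𝓝 0) := by
  have hupper : Tendsto (fun t : ℝ => (Real.sqrt (2*Real.pi))⁻¹ * (t * Real.exp (-t))) atTop
      (𝓝 ((Real.sqrt (2*Real.pi))⁻¹ * 0)) := by
    refine Tendsto.const_mul _ ?_
    have := Real.tendsto_pow_mul_exp_neg_atTop_nhds_zero 1
    simpa using this
  rw [mul_zero] at hupper
  apply tendsto_of_tendsto_of_tendsto_of_le_of_le' tendsto_const_nhds hupper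
  · filter_upwards [eventually_ge_atTop (0:ℝ)] with t ht
    exact mul_nonneg ht (stdPdf_pos t).le
  · filter_upwards [eventually_ge_atTop (2:ℝ)] with t ht
    rw [stdPdf]
    have hexp : Real.exp (-(t^2)/2) ≤ Real.exp (-t) := by
      apply Real.exp_le_exp.2
      nlinarith
    have hc : (0:ℝ) ≤ (Real.sqrt (2*Real.pi))⁻¹ := by positivity
    calc t * ((Real.sqrt (2*Real.pi))⁻¹ * Real.exp (-(t^2)/2))
        ≤ t * ((Real.sqrt (2*Real.pi))⁻¹ * Real.exp (-t)) := by
          apply mul_le_mul_of_nonneg_left (mul_le_mul_of_nonneg_left hexp hc) (by linarith)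
      _ = (Real.sqrt (2*Real.pi))⁻¹ * (t * Real.exp (-t)) := by ring

lemma tendsto_mul_stdPdf_atBot : Tendsto (fun v : ℝ => v * stdPdf v) atBot (𝓝 0) := by
  have h := (tendsto_mul_stdPdf_atTop.neg).comp tendsto_neg_atBot_atTop
  rw [neg_zero] at h
  refine h.congr fun v => ?_
  simp only [Function.comp_apply]
  rw [stdPdf_neg]
  ring

lemma tendsto_sq_mul_stdCdf_atBot : Tendsto (fun v : ℝ => stdCdf v * v^2) atBot (𝓝 0) := by
  have hupper : Tendsto (fun v : ℝ => -(v * stdPdf v)) atBot (𝓝 (-0)) :=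
    tendsto_mul_stdPdf_atBot.neg
  rw [neg_zero] at hupper
  apply tendsto_of_tendsto_of_tendsto_of_le_of_le' tendsto_const_nhds hupper
  · exact Filter.Eventually.of_forall fun v => mul_nonneg (stdCdf_nonneg v) (sq_nonneg v)
  · filter_upwards [eventually_le_atBot (-1:ℝ)] with v hv
    have hm := mills v (by linarith)
    have hφ := stdPdf_pos v
    have hvne : v ≠ 0 := by linarith
    have h2 : stdPdf v / -v * v^2 = -(v * stdPdf v) := by
      rw [div_mul_eq_mul_div, div_eq_iff (by linarith : (-v) ≠ 0)]
      ring
    nlinarith [sq_nonneg v]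

lemma tendsto_half_nhdsWithin : Tendsto (fun a : ℝ => a/2) (𝓝[>] (0:ℝ)) (𝓝[>] (0:ℝ)) := by
  apply tendsto_nhdsWithin_of_tendsto_nhds_of_eventually_within
  · have : Tendsto (fun a : ℝ => a/2) (𝓝 (0:ℝ)) (𝓝 ((0:ℝ)/2)) :=
      (continuous_id.div_const 2).tendsto 0
    rw [zero_div] at this
    exact this.mono_left nhdsWithin_le_nhds
  · filter_upwards [self_mem_nhdsWithin] with a (ha : a ∈ Ioi (0:ℝ))
    exact half_pos (mem_Ioi.1 ha)

lemma tendsto_F_zero :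
    Tendsto (fun a : ℝ => a * Htilde a + 2 * Gfun (a/2)) (𝓝[>] (0:ℝ)) (𝓝 0) := by
  have hv : Tendsto (fun a : ℝ => stdQuantile (a/2)) (𝓝[>] (0:ℝ)) atBot :=
    tendsto_stdQuantile_atBot.comp tendsto_half_nhdsWithin
  have hterm1 : Tendsto (fun a : ℝ => a * Htilde a) (𝓝[>] (0:ℝ)) (𝓝 0) := by
    have h1 : Tendsto (fun a : ℝ => -(2 * (stdCdf (stdQuantile (a/2)) * (stdQuantile (a/2))^2)))
        (𝓝[>] (0:ℝ)) (𝓝 (-(2 * 0))) :=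
      (((tendsto_sq_mul_stdCdf_atBot).comp hv).const_mul 2).neg
    rw [mul_zero, neg_zero] at h1
    apply h1.congr'
    filter_upwards [Ioo_mem_nhdsGT_of_mem (left_mem_Ico.2 (by norm_num : (0:ℝ) < 2))] with a ha
    have ha2 : a/2 ∈ Ioo (0:ℝ) 1 := ⟨by linarith [ha.1], by linarith [ha.2]⟩
    rw [stdCdf_stdQuantile ha2, Htilde]
    ring
  have hterm2 : Tendsto (fun a : ℝ => 2 * Gfun (a/2)) (𝓝[>] (0:ℝ)) (𝓝 0) := by
    have hid : Tendsto (fun a : ℝ => a) (𝓝[>] (0:ℝ)) (𝓝 0) :=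
      tendsto_id.mono_right nhdsWithin_le_nhds
    have h2 : Tendsto (fun a : ℝ => stdQuantile (a/2) * stdPdf (stdQuantile (a/2)))
        (𝓝[>] (0:ℝ)) (𝓝 0) := tendsto_mul_stdPdf_atBot.comp hv
    have h3 := hid.sub (h2.const_mul 2)
    norm_num at h3
    refine h3.congr fun a => ?_
    rw [Gfun]
    ring
  have := hterm1.add hterm2
  rw [add_zero] at this
  exact this

lemma tendsto_integral_gAux_zero :
    Tendsto (fun a : ℝ => ∫ u in (0:ℝ)..a, gAux u) (𝓝[>] (0:ℝ)) (𝓝 0) := by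
  apply squeeze_zero_norm' (a := fun a : ℝ => 2 * |a - 0|)
  · filter_upwards [Ioc_mem_nhdsGT_of_mem
      (left_mem_Ico.2 (by linarith [stdCdf_pos (-1)] : (0:ℝ) < 2 * stdCdf (-1)))] with a ha
    apply intervalIntegral.norm_integral_le_of_norm_le_const
    intro u hu
    rw [uIoc_of_le ha.1.le] at hu
    have hbd := gAux_bound hu.1 (hu.2.trans ha.2)
    rw [Real.norm_eq_abs, abs_le]
    exact ⟨by linarith [hbd.1], hbd.2⟩
  · have : Tendsto (fun a : ℝ => 2 * |a - 0|) (𝓝 (0:ℝ)) (𝓝 (2 * |(0:ℝ) - 0|)) := by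
      apply Tendsto.const_mul
      exact ((continuous_id.sub continuous_const).abs).tendsto 0
    rw [show 2*|(0:ℝ)-0| = 0 by norm_num] at this
    exact this.mono_left nhdsWithin_le_nhds

theorem integral_u_dHtilde :
    ∀ x ∈ Set.Ioo (0 : ℝ) 1,
      (∫ u in (0 : ℝ)..x, u * deriv Htilde u) = x * Htilde x + 2 * Gfun (x / 2) := by
  intro x hx
  have hcongr : (∫ u in (0:ℝ)..x, u * deriv Htilde u) = ∫ u in (0:ℝ)..x, gAux u := by
    apply intervalIntegral.integral_congr_ae
    refine Filter.Eventually.of_forall fun u hu => ?_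
    rw [uIoc_of_le hx.1.le] at hu
    have hu' : u ∈ Ioo (0:ℝ) 1 := ⟨hu.1, lt_of_le_of_lt hu.2 hx.2⟩
    rw [(hasDerivAt_Htilde hu').deriv]
    rfl
  rw [hcongr]
  have key : ∀ a ∈ Ioc (0:ℝ) x,
      (∫ u in (0:ℝ)..x, gAux u) - (x * Htilde x + 2 * Gfun (x/2)) =
      (∫ u in (0:ℝ)..a, gAux u) - (a * Htilde a + 2 * Gfun (a/2)) := by
    intro a ha
    have hsplit : (∫ u in (0:ℝ)..x, gAux u) =
        (∫ u in (0:ℝ)..a, gAux u) + ∫ u in a..x, gAux u :=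
      (intervalIntegral.integral_add_adjacent_intervals
        (intervalIntegrable_gAux_zero ha.1 (lt_of_le_of_lt ha.2 hx.2))
        (intervalIntegrable_gAux_right ha.1 ha.2 hx.2)).symm
    have hftc : ∫ u in a..x, gAux u =
        (x * Htilde x + 2 * Gfun (x/2)) - (a * Htilde a + 2 * Gfun (a/2)) := by
      apply intervalIntegral.integral_eq_sub_of_hasDerivAt
      · intro t ht
        rw [uIcc_of_le ha.2] at ht
        exact hasDerivAt_F ⟨lt_of_lt_of_le ha.1 ht.1, lt_of_le_of_lt ht.2 hx.2⟩
      · exact intervalIntegrable_gAux_right ha.1 ha.2 hx.2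
    rw [hsplit, hftc]
    ring
  have h1 : Tendsto (fun a : ℝ => (∫ u in (0:ℝ)..a, gAux u) - (a * Htilde a + 2 * Gfun (a/2)))
      (𝓝[>] (0:ℝ)) (𝓝 0) := by
    have := tendsto_integral_gAux_zero.sub tendsto_F_zero
    rwa [sub_zero] at this
  have h2 : Tendsto (fun a : ℝ => (∫ u in (0:ℝ)..a, gAux u) - (a * Htilde a + 2 * Gfun (a/2)))
      (𝓝[>] (0:ℝ)) (𝓝 ((∫ u in (0:ℝ)..x, gAux u) - (x * Htilde x + 2 * Gfun (x/2)))) := by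
    refine Filter.Tendsto.congr' ?_ tendsto_const_nhds
    filter_upwards [Ioc_mem_nhdsGT_of_mem (left_mem_Ico.2 hx.1)] with a ha
    exact key a ha
  have hfin := tendsto_nhds_unique h2 h1
  linarith
end

section
/- Suppose X ∈ ℝ^{n×K} has full column rank with QR decomposition X = QR (Q orthonormal columns, R upper triangular, ordered columns). Let S_k = {j₁,…,j_k} be the support of the best k-predictor LS fit of y on the columns of Q, with coefficient vector γ̂(k) (i.e., γ̂_j(k) = (Qᵀy)_j·1{j ∈ S_k}). Then the vector β̂(k) defined by R·β̂(k) = γ̂(k) satisfies β̂(k) = Σ_{j∈S_k} (α̂^{(j)} − α̂^{(j−1)}), where α̂^{(j)} ∈ ℝ^K has its first j entries equal to the least squares coefficients of y regressed on the first j columns of X and its remaining entries zero. -/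
open Matrix Finset

private lemma ls_expand {n K : ℕ} (Q : Matrix (Fin n) (Fin K) ℝ)
    (hQ : Qᵀ * Q = 1) (y : Fin n → ℝ) (c : Fin K → ℝ) :
    ∑ t : Fin n, (y t - (Q *ᵥ c) t) ^ 2
      = ∑ t : Fin n, (y t) ^ 2 - (Qᵀ *ᵥ y) ⬝ᵥ (Qᵀ *ᵥ y)
        + ∑ j : Fin K, (c j - (Qᵀ *ᵥ y) j) ^ 2 := by
  have h2 : y ⬝ᵥ (Q *ᵥ c) = (Qᵀ *ᵥ y) ⬝ᵥ c := by
    rw [Matrix.dotProduct_mulVec, Matrix.mulVec_transpose]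
  have h3 : (Q *ᵥ c) ⬝ᵥ (Q *ᵥ c) = c ⬝ᵥ c := by
    rw [Matrix.dotProduct_mulVec, ← Matrix.mulVec_transpose, Matrix.mulVec_mulVec, hQ,
      Matrix.one_mulVec]
  have e1 : ∑ t : Fin n, (y t - (Q *ᵥ c) t) ^ 2
      = ∑ t : Fin n, (y t) ^ 2 - 2 * (y ⬝ᵥ (Q *ᵥ c)) + (Q *ᵥ c) ⬝ᵥ (Q *ᵥ c) := by
    simp only [dotProduct, Finset.mul_sum]
    rw [← Finset.sum_sub_distrib, ← Finset.sum_add_distrib]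
    apply Finset.sum_congr rfl
    intros; ring
  have e2 : ∑ j : Fin K, (c j - (Qᵀ *ᵥ y) j) ^ 2
      = c ⬝ᵥ c - 2 * ((Qᵀ *ᵥ y) ⬝ᵥ c) + (Qᵀ *ᵥ y) ⬝ᵥ (Qᵀ *ᵥ y) := by
    simp only [dotProduct, Finset.mul_sum]
    rw [← Finset.sum_sub_distrib, ← Finset.sum_add_distrib]
    apply Finset.sum_congr rfl
    intros; ring
  rw [e1, e2, h2, h3]; ring

theorem boss_coefficients_telescope
    (n K : ℕ) (X Q : Matrix (Fin n) (Fin K) ℝ) (R : Matrix (Fin K) (Fin K) ℝ)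
    (hQR : X = Q * R)
    (hQ : Qᵀ * Q = 1)
    (hRtri : ∀ i j : Fin K, (j : ℕ) < (i : ℕ) → R i j = 0)
    (hR : IsUnit R.det)
    (y : Fin n → ℝ)
    (k : ℕ) (S : Finset (Fin K)) (hS : S.card = k)
    -- `S` is the support of the best `k`-predictor LS fit of `y` on the columns of `Q`:
    -- it maximizes the explained sum of squares among size-`k` subsets.
    (hbest : ∀ T : Finset (Fin K), T.card = k →
      ∑ j ∈ T, ((Qᵀ *ᵥ y) j) ^ 2 ≤ ∑ j ∈ S, ((Qᵀ *ᵥ y) j) ^ 2)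
    (γ : Fin K → ℝ)
    (hγ : ∀ j : Fin K, γ j = if j ∈ S then (Qᵀ *ᵥ y) j else 0)
    (α : ℕ → Fin K → ℝ)
    -- `α m` puts zero weight outside the first `m` columns
    (hαsupp : ∀ m : ℕ, m ≤ K → ∀ i : Fin K, m ≤ (i : ℕ) → α m i = 0)
    -- and is the least squares fit of `y` on the first `m` columns of `X`
    (hαls : ∀ m : ℕ, m ≤ K → ∀ b : Fin K → ℝ, (∀ i : Fin K, m ≤ (i : ℕ) → b i = 0) →
      ∑ t : Fin n, (y t - (X *ᵥ α m) t) ^ 2 ≤ ∑ t : Fin n, (y t - (X *ᵥ b) t) ^ 2)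
    (β : Fin K → ℝ) (hβ : R *ᵥ β = γ) :
    β = ∑ j ∈ S, (α ((j : ℕ) + 1) - α (j : ℕ)) := by
  haveI : Invertible R := R.invertibleOfIsUnitDet hR
  set w : Fin K → ℝ := Qᵀ *ᵥ y with hw
  -- R⁻¹ is upper triangular
  have hRinvtri : ∀ i j : Fin K, (j : ℕ) < (i : ℕ) → R⁻¹ i j = 0 := by
    have htri : R.BlockTriangular (id : Fin K → Fin K) := by
      intro i j h
      exact hRtri i j h
    have := Matrix.blockTriangular_inv_of_blockTriangular htri
    intro i j h
    exact this (show (id j : Fin K) < id i from Fin.lt_def.mpr h)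
  -- key: R *ᵥ α m is w truncated to first m coordinates
  have key : ∀ m : ℕ, m ≤ K → ∀ i : Fin K,
      (R *ᵥ α m) i = if (i : ℕ) < m then w i else 0 := by
    intro m hm
    set c : Fin K → ℝ := R *ᵥ α m with hc
    have hc0 : ∀ i : Fin K, m ≤ (i : ℕ) → c i = 0 := by
      intro i hi
      rw [hc]
      show ∑ j, R i j * α m j = 0
      apply Finset.sum_eq_zero
      intro j _
      rcases lt_or_ge (j : ℕ) m with h | h
      · rw [hRtri i j (lt_of_lt_of_le h hi), zero_mul]
      · rw [hαsupp m hm j h, mul_zero]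
    set c' : Fin K → ℝ := fun j => if (j : ℕ) < m then w j else 0 with hc'
    set b : Fin K → ℝ := R⁻¹ *ᵥ c' with hb
    have hb0 : ∀ i : Fin K, m ≤ (i : ℕ) → b i = 0 := by
      intro i hi
      rw [hb]
      show ∑ j, R⁻¹ i j * c' j = 0
      apply Finset.sum_eq_zero
      intro j _
      rcases lt_or_ge (j : ℕ) m with h | h
      · rw [hRinvtri i j (lt_of_lt_of_le h hi), zero_mul]
      · simp [hc', not_lt.mpr h]
    have hRb : R *ᵥ b = c' := by
      rw [hb, Matrix.mulVec_mulVec, Matrix.mul_nonsing_inv R hR, Matrix.one_mulVec]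
    have hineq := hαls m hm b hb0
    rw [hQR, ← Matrix.mulVec_mulVec, ← Matrix.mulVec_mulVec, ← hc, hRb,
      ls_expand Q hQ y c, ls_expand Q hQ y c'] at hineq
    have hsum : ∑ j : Fin K, (c j - w j) ^ 2 ≤ ∑ j : Fin K, (c' j - w j) ^ 2 :=
      le_of_add_le_add_left hineq
    have hzero : ∑ j : Fin K, (c j - c' j) ^ 2 ≤ 0 := by
      have heq : ∑ j : Fin K, (c j - c' j) ^ 2
          = ∑ j : Fin K, ((c j - w j) ^ 2 - (c' j - w j) ^ 2) := by
        apply Finset.sum_congr rfl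
        intro j _
        by_cases h : (j : ℕ) < m
        · simp [hc', h]
        · push_neg at h
          rw [hc0 j h]
          simp [hc', not_lt.mpr h]
      rw [heq, Finset.sum_sub_distrib]
      linarith
    have hnn : ∀ j ∈ (univ : Finset (Fin K)), 0 ≤ (c j - c' j) ^ 2 :=
      fun j _ => sq_nonneg _
    have hall := (Finset.sum_eq_zero_iff_of_nonneg hnn).mp
      (le_antisymm hzero (Finset.sum_nonneg hnn))
    intro i
    have := hall i (mem_univ i)
    have hci : c i = c' i := by nlinarith [sq_nonneg (c i - c' i)]
    exact hci
  -- telescoping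
  have hR2 : R *ᵥ (∑ j ∈ S, (α ((j : ℕ) + 1) - α (j : ℕ))) = γ := by
    have hsum : R *ᵥ (∑ j ∈ S, (α ((j : ℕ) + 1) - α (j : ℕ)))
        = ∑ j ∈ S, (R *ᵥ α ((j : ℕ) + 1) - R *ᵥ α (j : ℕ)) := by
      have hrw : R *ᵥ (∑ j ∈ S, (α ((j : ℕ) + 1) - α (j : ℕ)))
          = R.mulVecLin (∑ j ∈ S, (α ((j : ℕ) + 1) - α (j : ℕ))) := rfl
      rw [hrw, map_sum]
      exact Finset.sum_congr rfl fun j _ => by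
        rw [map_sub]; simp [Matrix.mulVecLin_apply]
    funext i
    rw [hsum]
    have : ∀ j ∈ S, (R *ᵥ α ((j : ℕ) + 1) - R *ᵥ α (j : ℕ)) i
        = if i = j then w i else 0 := by
      intro j _
      have h1 := key ((j : ℕ) + 1) j.isLt i
      have h2 := key (j : ℕ) (le_of_lt j.isLt) i
      simp only [Pi.sub_apply, h1, h2]
      rcases lt_trichotomy (i : ℕ) (j : ℕ) with h | h | h
      · rw [if_pos (by omega), if_pos h, if_neg (by omega : ¬ i = j)]; ring
      · rw [if_pos (by omega), if_neg (by omega), if_pos (Fin.ext h)]; ring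
      · rw [if_neg (by omega), if_neg (by omega), if_neg (by omega : ¬ i = j)]; ring
    rw [show (∑ j ∈ S, (R *ᵥ α ((j : ℕ) + 1) - R *ᵥ α (j : ℕ))) i
        = ∑ j ∈ S, (R *ᵥ α ((j : ℕ) + 1) - R *ᵥ α (j : ℕ)) i from
      Finset.sum_apply i S _]
    rw [Finset.sum_congr rfl this, Finset.sum_ite_eq S i (fun _ => w i), hγ i, hw]
  have : R⁻¹ *ᵥ (R *ᵥ β) = R⁻¹ *ᵥ (R *ᵥ (∑ j ∈ S, (α ((j : ℕ) + 1) - α (j : ℕ)))) := by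
    rw [hβ, hR2]
  simpa [Matrix.mulVec_mulVec, Matrix.nonsing_inv_mul R hR, Matrix.one_mulVec] using this
end
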